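/- Let G be a graph on n vertices and k ≥ n/2. If d_k(G)/C(n,k) ≥ (n−k)/(k+1), then d_{i+1}(G) ≤ d_i(G) for all i ≥ k. -/

import Mathlib

/-!
Dominating sets form an up-closed family, so the upward local LYM inequality gives
`d_i (n - i) ≤ d_{i+1} (i + 1)`: the ratio `r_i = d_i / C(n,i)` is non-decreasing. Hence for
`i ≥ k`, `d_{i+1} ≤ C(n,i+1) = C(n,i) (n-i)/(i+1) ≤ C(n,i) (n-k)/(k+1) ≤ C(n,i) r_k ≤ d_i`.
-/

/-- The number of dominating sets of cardinality `i` in `G`. -/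
noncomputable def domCount {V : Type*} (G : SimpleGraph V) (i : ℕ) : ℕ :=
  Nat.card {s : Finset V // s.card = i ∧ ∀ v, v ∈ s ∨ ∃ u ∈ s, G.Adj u v}

open Finset
open scoped FinsetFamily

theorem Nat.choose_succ_mul_succ_le {k i : ℕ} (n : ℕ) (hki : k ≤ i) :
    n.choose (i + 1) * (k + 1) ≤ n.choose i * (n - k) := by
  refine Nat.le_of_mul_le_mul_right ?_ (Nat.succ_pos i)
  calc n.choose (i + 1) * (k + 1) * (i + 1)
      = n.choose i * ((n - i) * (k + 1)) := by rw [mul_right_comm, Nat.choose_succ_right_eq,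
        mul_assoc]
    _ ≤ n.choose i * ((n - k) * (i + 1)) := by gcongr
    _ = n.choose i * (n - k) * (i + 1) := by rw [mul_assoc]

namespace Finset

variable {α : Type*} [DecidableEq α] [Fintype α] {𝒜 : Finset (Finset α)} {r : ℕ}

/-- The upward **local LYM inequality**, with cancelled denominators. -/
theorem card_mul_le_card_upShadow_mul (h𝒜 : (𝒜 : Set (Finset α)).Sized r) :
    #𝒜 * (Fintype.card α - r) ≤ #(∂⁺ 𝒜) * (r + 1) := by
  obtain hr | hr := lt_or_ge (Fintype.card α) r
  · simp [Nat.sub_eq_zero_of_le hr.le]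
  simpa [Nat.sub_sub_self hr] using local_lubell_yamamoto_meshalkin_inequality_mul h𝒜.compls

theorem upShadow_slice_subset_slice_succ (h𝒜 : IsUpperSet (𝒜 : Set (Finset α))) (r : ℕ) :
    ∂⁺ (𝒜 # r) ⊆ 𝒜 # (r + 1) := by
  intro t ht
  obtain ⟨s, hs, a, ha, rfl⟩ := mem_upShadow_iff.1 ht
  rw [mem_slice] at hs ⊢
  exact ⟨h𝒜 (subset_insert a s) hs.1, by rw [card_insert_of_notMem ha, hs.2]⟩

theorem IsUpperSet.card_slice_mul_le (h𝒜 : IsUpperSet (𝒜 : Set (Finset α))) (r : ℕ) :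
    #(𝒜 # r) * (Fintype.card α - r) ≤ #(𝒜 # (r + 1)) * (r + 1) :=
  (card_mul_le_card_upShadow_mul sized_slice).trans <|
    Nat.mul_le_mul_right _ <| card_le_card <| upShadow_slice_subset_slice_succ h𝒜 r

theorem IsUpperSet.card_slice_mul_choose_le (h𝒜 : IsUpperSet (𝒜 : Set (Finset α))) {r s : ℕ}
    (hrs : r ≤ s) :
    #(𝒜 # r) * (Fintype.card α).choose s ≤ #(𝒜 # s) * (Fintype.card α).choose r := by
  set n := Fintype.card α
  induction s, hrs using Nat.le_induction with
  | base => rw [mul_comm]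
  | succ s _ ih =>
    refine Nat.le_of_mul_le_mul_right ?_ (Nat.succ_pos s)
    calc #(𝒜 # r) * n.choose (s + 1) * (s + 1)
        = #(𝒜 # r) * n.choose s * (n - s) := by rw [mul_assoc, Nat.choose_succ_right_eq, mul_assoc]
      _ ≤ #(𝒜 # s) * n.choose r * (n - s) := by gcongr
      _ = #(𝒜 # s) * (n - s) * n.choose r := by ring
      _ ≤ #(𝒜 # (s + 1)) * (s + 1) * n.choose r := Nat.mul_le_mul_right _ (h𝒜.card_slice_mul_le s)
      _ = #(𝒜 # (s + 1)) * n.choose r * (s + 1) := by ring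

theorem IsUpperSet.card_slice_succ_le (h𝒜 : IsUpperSet (𝒜 : Set (Finset α))) {k i : ℕ}
    (hk : (Fintype.card α - k) * (Fintype.card α).choose k ≤ #(𝒜 # k) * (k + 1))
    (hki : k ≤ i) : #(𝒜 # (i + 1)) ≤ #(𝒜 # i) := by
  set n := Fintype.card α
  obtain hnk | hkn := lt_or_ge n k
  · have := (sized_slice (𝒜 := 𝒜) (r := i + 1)).card_le
    rw [Nat.choose_eq_zero_of_lt (by omega)] at this
    omega
  refine Nat.le_of_mul_le_mul_right ?_ (Nat.mul_pos (Nat.succ_pos k) (Nat.choose_pos hkn))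
  calc #(𝒜 # (i + 1)) * ((k + 1) * n.choose k)
      ≤ n.choose (i + 1) * (k + 1) * n.choose k := by
        rw [← mul_assoc]; gcongr; exact sized_slice.card_le
    _ ≤ n.choose i * ((n - k) * n.choose k) := by
        rw [← mul_assoc]; exact Nat.mul_le_mul_right _ (Nat.choose_succ_mul_succ_le n hki)
    _ ≤ n.choose i * (#(𝒜 # k) * (k + 1)) := by gcongr
    _ = #(𝒜 # k) * n.choose i * (k + 1) := by ring
    _ ≤ #(𝒜 # i) * n.choose k * (k + 1) := Nat.mul_le_mul_right _ (h𝒜.card_slice_mul_choose_le hki)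
    _ = #(𝒜 # i) * ((k + 1) * n.choose k) := by ring

end Finset

namespace SimpleGraph

variable {V : Type*} [Fintype V] (G : SimpleGraph V)

open Classical in
noncomputable def dominatingSets : Finset (Finset V) :=
  {s | ∀ v, v ∈ s ∨ ∃ u ∈ s, G.Adj u v}

theorem isUpperSet_dominatingSets : IsUpperSet (G.dominatingSets : Set (Finset V)) := by
  intro s t hst hs
  simp only [dominatingSets, coe_filter, mem_univ, true_and, Set.mem_ofPred_eq] at hs ⊢
  intro v
  obtain hv | ⟨u, hu, huv⟩ := hs v
  · exact Or.inl (hst hv)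
  · exact Or.inr ⟨u, hst hu, huv⟩

open Classical in
theorem domCount_eq_card_slice (i : ℕ) : domCount G i = #(G.dominatingSets # i) := by
  rw [domCount, Nat.card_eq_fintype_card, Fintype.card_subtype]
  congr 1
  ext s
  simp [dominatingSets, mem_slice, and_comm]

end SimpleGraph

theorem stmt_11_general {V : Type*} [Fintype V] (G : SimpleGraph V) (k : ℕ)
    (h : ((Fintype.card V : ℝ) - k) / (k + 1) ≤
      (domCount G k : ℝ) / (Fintype.card V).choose k) :
    ∀ i, k ≤ i → domCount G (i + 1) ≤ domCount G i := by
  classical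
  intro i hki
  simp only [G.domCount_eq_card_slice] at h ⊢
  refine G.isUpperSet_dominatingSets.card_slice_succ_le ?_ hki
  set n := Fintype.card V
  obtain hnk | hkn := lt_or_ge n k
  · simp [Nat.sub_eq_zero_of_le hnk.le]
  rw [div_le_div_iff₀ (by positivity) (by exact_mod_cast Nat.choose_pos hkn),
    ← Nat.cast_sub hkn] at h
  exact_mod_cast h

/-- If `k ≥ n/2` and `d_k(G)/C(n,k) ≥ (n-k)/(k+1)`, then the sequence `d_i(G)` is
non-increasing from `k` on. -/
theorem stmt_11 {V : Type*} [Fintype V] (G : SimpleGraph V) (k : ℕ)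
    (hk : (Fintype.card V : ℝ) / 2 ≤ k)
    (h : ((Fintype.card V : ℝ) - k) / (k + 1) ≤
      (domCount G k : ℝ) / (Fintype.card V).choose k) :
    ∀ i, k ≤ i → domCount G (i + 1) ≤ domCount G i :=
  stmt_11_general G k h
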